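/- Let 0 → M → G₁ → G₂ → G → 1 be an exact sequence where G₁ → G₂ is a crossed module of groups with kernel the abelian group M, G₂ has nilpotency class c₂, and the action of G₂ on M (through G) has length d. Then G₁ is nilpotent of class at most c₂ + d. -/

import Mathlib

/-!
Since `G₁ / ker k` embeds in `G₂`, the term `γ_{c₂+1}` of the lower central series of `G₁` lies
in `M = ker k`. By the Peiffer identity a commutator `m g m⁻¹ g⁻¹` in `G₁` is the inverse of
`k g • m * m⁻¹`, so each further step of the lower central series of `G₁` lands one step further
in the series `[M, _i G₂]`, which reaches `1` after `d` steps.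
-/

/-- Iterated action-commutator subgroups `[ker k, _i G₂]` inside `G₁`, for an action
`η : G₂ →* MulAut G₁`. -/
def cmIter {G₁ G₂ : Type*} [Group G₁] [Group G₂] (k : G₁ →* G₂) (η : G₂ →* MulAut G₁) :
    ℕ → Subgroup G₁
  | 0 => k.ker
  | (i+1) => Subgroup.closure {x | ∃ g₂ : G₂, ∃ m ∈ cmIter k η i, x = η g₂ m * m⁻¹}

open Subgroup

theorem Subgroup.lowerCentralSeries_le_ker_of_eq_bot {G K : Type*} [Group G] [Group K]
    (k : G →* K) {n : ℕ} (hK : (⊤ : Subgroup K).lowerCentralSeries n = ⊥) :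
    (⊤ : Subgroup G).lowerCentralSeries n ≤ k.ker := by
  rw [← map_eq_bot_iff, ← le_bot_iff, ← hK, map_lowerCentralSeries]
  exact lowerCentralSeries_mono n le_top

section CrossedModule

variable {G₁ G₂ : Type*} [Group G₁] [Group G₂] {k : G₁ →* G₂} {η : G₂ →* MulAut G₁}

theorem commutator_cmIter_top_le
    (hpeiffer : ∀ g₁ g₁' : G₁, η (k g₁) g₁' = g₁ * g₁' * g₁⁻¹) (i : ℕ) :
    ⁅cmIter k η i, ⊤⁆ ≤ cmIter k η (i + 1) := by
  rw [commutator_le]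
  intro m hm g _
  have hgen : η (k g) m * m⁻¹ ∈ cmIter k η (i + 1) := subset_closure ⟨k g, m, hm, rfl⟩
  have hcomm : m * g * m⁻¹ * g⁻¹ = (η (k g) m * m⁻¹)⁻¹ := by
    rw [hpeiffer]
    group
  rw [commutatorElement_def, hcomm]
  exact inv_mem hgen

theorem lowerCentralSeries_add_le_cmIter
    (hpeiffer : ∀ g₁ g₁' : G₁, η (k g₁) g₁' = g₁ * g₁' * g₁⁻¹) {c₂ : ℕ}
    (hc : (⊤ : Subgroup G₂).lowerCentralSeries c₂ = ⊥) (i : ℕ) :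
    (⊤ : Subgroup G₁).lowerCentralSeries (c₂ + i) ≤ cmIter k η i := by
  induction i with
  | zero => exact lowerCentralSeries_le_ker_of_eq_bot k hc
  | succ i ih =>
    rw [← add_assoc, Subgroup.lowerCentralSeries_succ]
    exact (commutator_mono ih le_rfl).trans (commutator_cmIter_top_le hpeiffer i)

end CrossedModule

theorem stmt16_general {G₁ G₂ : Type*} [Group G₁] [Group G₂] (k : G₁ →* G₂) (η : G₂ →* MulAut G₁)
    (hpeiffer : ∀ g₁ g₁' : G₁, η (k g₁) g₁' = g₁ * g₁' * g₁⁻¹)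
    (c₂ d : ℕ)
    (hc : (⊤ : Subgroup G₂).lowerCentralSeries c₂ = ⊥)
    (hd : cmIter k η d = ⊥) :
    (⊤ : Subgroup G₁).lowerCentralSeries (c₂ + d) = ⊥ :=
  le_bot_iff.mp (hd ▸ lowerCentralSeries_add_le_cmIter hpeiffer hc d)

/-- If `k : G₁ → G₂` is a crossed module of groups with abelian kernel `M = ker k`, `G₂` of
nilpotency class at most `c₂`, and the action of `G₂` on `M` of length at most `d`, then `G₁`
is nilpotent of class at most `c₂ + d`. -/
theorem stmt16 {G₁ G₂ : Type*} [Group G₁] [Group G₂] (k : G₁ →* G₂) (η : G₂ →* MulAut G₁)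
    (hequiv : ∀ (g₂ : G₂) (g₁ : G₁), k (η g₂ g₁) = g₂ * k g₁ * g₂⁻¹)
    (hpeiffer : ∀ g₁ g₁' : G₁, η (k g₁) g₁' = g₁ * g₁' * g₁⁻¹)
    (hab : ∀ a b : G₁, a ∈ k.ker → b ∈ k.ker → a * b = b * a)
    (c₂ d : ℕ)
    (hc : (⊤ : Subgroup G₂).lowerCentralSeries c₂ = ⊥)
    (hd : cmIter k η d = ⊥) :
    (⊤ : Subgroup G₁).lowerCentralSeries (c₂ + d) = ⊥ :=
  stmt16_general k η hpeiffer c₂ d hc hd
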